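/- Let (A_t)_{t=0}^T, (B_t)_{t=0}^T be integer staircase sequences and (x̄_t) a feasible 0-1 solution. Let t* ∈ {1,...,T} with x̄_{t*} = 0, A_{t*−1} < B_{t*}, Σ_{i=1}^{t*−1} x̄_i = A_{t*−1}, and x̄_t = 0 for all t ≥ t*. Then the sequence (x̂_t) with x̂_{t*} = 1 and x̂_t = x̄_t for t ≠ t* is feasible. -/
import Mathlib


def Staircase (T : ℕ) (Z : ℕ → ℤ) : Prop :=
  Z 0 = 0 ∧ ∀ t ∈ Finset.Icc 1 T, Z (t - 1) ≤ Z t ∧ Z t ≤ Z (t - 1) + 1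

def Binary (T : ℕ) (x : ℕ → ℤ) : Prop :=
  ∀ t ∈ Finset.Icc 1 T, x t = 0 ∨ x t = 1

def Feasible (T : ℕ) (A B : ℕ → ℤ) (x : ℕ → ℤ) : Prop :=
  Binary T x ∧ ∀ t ∈ Finset.Icc 1 T,
    A t ≤ ∑ i ∈ Finset.Icc 1 t, x i ∧ ∑ i ∈ Finset.Icc 1 t, x i ≤ B t

noncomputable def cost (T : ℕ) (P : ℕ → ℝ) (x : ℕ → ℤ) : ℝ :=
  ∑ t ∈ Finset.Icc 1 T, P t * (x t : ℝ)

lemma stair_mono {T : ℕ} {Z : ℕ → ℤ} (h : Staircase T Z) :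
    ∀ s t, s ≤ t → t ≤ T → Z s ≤ Z t := by
  intro s t hst htT
  induction t with
  | zero =>
    have : s = 0 := Nat.le_zero.mp hst
    simp [this]
  | succ n ih =>
    rcases Nat.lt_or_ge s (n+1) with hlt | hge
    · have h1 : Z n ≤ Z (n+1) := by
        have := (h.2 (n+1) (Finset.mem_Icc.mpr ⟨Nat.succ_le_succ (Nat.zero_le n), htT⟩)).1
        simpa using this
      exact le_trans (ih (Nat.lt_succ_iff.mp hlt) (Nat.le_of_succ_le htT)) h1
    · have : s = n+1 := le_antisymm hst hge
      simp [this]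

theorem stmt9 (T : ℕ) (A B : ℕ → ℤ)
    (hA : Staircase T A) (hB : Staircase T B)
    (xb : ℕ → ℤ) (hxb : Feasible T A B xb)
    (ts : ℕ) (hts : ts ∈ Finset.Icc 1 T) (hx0 : xb ts = 0)
    (hlt : A (ts - 1) < B ts)
    (hsum : ∑ i ∈ Finset.Icc 1 (ts - 1), xb i = A (ts - 1))
    (htail : ∀ t, ts ≤ t → xb t = 0) :
    Feasible T A B (fun t => if t = ts then 1 else xb t) := by
  obtain ⟨hts1, htsT⟩ := Finset.mem_Icc.mp hts
  obtain ⟨hbin, hfeas⟩ := hxb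
  -- sum of new seq
  have hsum_new : ∀ t, ∑ i ∈ Finset.Icc 1 t, (if i = ts then (1:ℤ) else xb i)
      = (∑ i ∈ Finset.Icc 1 t, xb i) + (if ts ∈ Finset.Icc 1 t then 1 else 0) := by
    intro t
    have : ∀ i, (if i = ts then (1:ℤ) else xb i) = xb i + (if i = ts then 1 else 0) := by
      intro i
      by_cases h : i = ts <;> simp [h, hx0]
    rw [Finset.sum_congr rfl (fun i _ => this i), Finset.sum_add_distrib,
      Finset.sum_ite_eq' (Finset.Icc 1 t) ts (fun _ => (1:ℤ))]
  -- for t ≥ ts, sum xb over Icc 1 t = A (ts-1)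
  have hSt : ∀ t, ts ≤ t → ∑ i ∈ Finset.Icc 1 t, xb i = A (ts - 1) := by
    intro t ht
    rw [← hsum]
    symm
    apply Finset.sum_subset
    · exact Finset.Icc_subset_Icc_right (by omega)
    · intro i hi hni
      simp only [Finset.mem_Icc] at hi hni
      exact htail i (by omega)
  constructor
  · intro t ht
    by_cases h : t = ts
    · right; simp [h]
    · have := hbin t ht
      simpa [h] using this
  · intro t ht
    obtain ⟨ht1, htT'⟩ := Finset.mem_Icc.mp ht
    rw [hsum_new]
    by_cases hcase : ts ≤ t
    · have hmem : ts ∈ Finset.Icc 1 t := Finset.mem_Icc.mpr ⟨hts1, hcase⟩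
      rw [if_pos hmem, hSt t hcase]
      constructor
      · have hAt := (hfeas t ht).1
        rw [hSt t hcase] at hAt
        linarith
      · have hBmono : B ts ≤ B t := stair_mono hB ts t hcase htT'
        linarith
    · have hmem : ts ∉ Finset.Icc 1 t := by
        simp only [Finset.mem_Icc]; omega
      rw [if_neg hmem]
      simpa using hfeas t ht
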